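/- arXiv:2109.06373 — 4 statements merged into one kernel-verified Lean document; each statement's English description precedes it below -/
import Mathlib

section
/- The number of noncrossing set partitions of {1,...,n} equals the Catalan number Cat(n) = (1/(n+1))·binom(2n,n). -/
/-!
Noncrossing partitions are handled as equivalence relations on `Fin n`. For a noncrossing
relation on `{0, …, n}` let `i + 1` be the least positive element of the block of `0` (`i = n`
if there is none). No block meets both `{1, …, i}` and its complement, since it would cross the
arc from `0` to `i + 1`. Hence the relation is the gluing of a noncrossing relation on
`{1, …, i}` and one on `{i + 1, …, n}`, with `0` joined to the block of `i + 1`, and every such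
pair glues to a noncrossing relation. This bijection gives the Catalan recursion
`C (n + 1) = ∑ i, C i * C (n - i)`.
-/

open Finset

/-- A set partition of `[n]` is noncrossing if whenever `a < b < c < d` with `a,c` in a
block `B` and `b,d` in a block `C`, then `B = C`. -/
def Noncrossing {n : ℕ} (π : Finpartition (Finset.univ : Finset (Fin n))) : Prop :=
  ∀ B ∈ π.parts, ∀ C ∈ π.parts, ∀ a b c d : Fin n,
    a < b → b < c → c < d → a ∈ B → c ∈ B → b ∈ C → d ∈ C → B = C

namespace Setoid

variable {α β : Type*}

def IsNoncrossing [LT α] (s : Setoid α) : Prop :=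
  ∀ ⦃a b c d : α⦄, a < b → b < c → c < d → s a c → s b d → s a b

theorem isNoncrossing_of_subsingleton [Preorder α] [Subsingleton α] (s : Setoid α) :
    s.IsNoncrossing := fun a b _ _ hab _ _ _ _ => (hab.ne (Subsingleton.elim a b)).elim

theorem IsNoncrossing.comap [Preorder α] [PartialOrder β] {s : Setoid β}
    (hs : s.IsNoncrossing) {f : α → β} (hf : Monotone f) : (s.comap f).IsNoncrossing := by
  intro a b c d hab hbc hcd hac hbd
  rw [comap_rel] at *
  rcases (hf hab.le).lt_or_eq with hab' | hab'
  · rcases (hf hbc.le).lt_or_eq with hbc' | hbc'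
    · rcases (hf hcd.le).lt_or_eq with hcd' | hcd'
      · exact hs hab' hbc' hcd' hac hbd
      · exact s.trans' hac (s.symm' (hcd' ▸ hbd))
    · exact hbc' ▸ hac
  · exact hab' ▸ s.refl' _

/-- When no block leaves the order-convex set `L`, a crossing lies entirely inside `L` or
entirely inside its complement. -/
theorem isNoncrossing_of_ordConnected [Preorder α] {s : Setoid α} {L : Set α}
    (hL : L.OrdConnected) (hsat : ∀ ⦃a b⦄, s a b → a ∈ L → b ∈ L)
    (hin : (s.comap ((↑) : L → α)).IsNoncrossing)
    (hout : (s.comap ((↑) : ↥Lᶜ → α)).IsNoncrossing) : s.IsNoncrossing := by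
  intro a b c d hab hbc hcd hac hbd
  by_cases ha : a ∈ L
  · have hc : c ∈ L := hsat hac ha
    have hb : b ∈ L := hL.out ha hc ⟨hab.le, hbc.le⟩
    exact hin (a := ⟨a, ha⟩) (b := ⟨b, hb⟩) (c := ⟨c, hc⟩) (d := ⟨d, hsat hbd hb⟩)
      hab hbc hcd hac hbd
  · have hc : c ∉ L := fun hc => ha (hsat (s.symm' hac) hc)
    have hb : b ∉ L := fun hb => hc (hL.out hb (hsat hbd hb) ⟨hbc.le, hcd.le⟩)
    have hd : d ∉ L := fun hd => hb (hsat (s.symm' hbd) hd)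
    exact hout (a := ⟨a, ha⟩) (b := ⟨b, hb⟩) (c := ⟨c, hc⟩) (d := ⟨d, hd⟩)
      hab hbc hcd hac hbd

instance [Finite α] : Finite (Setoid α) :=
  Finite.of_injective (fun s : Setoid α => ⇑s) fun _ _ h => eq_iff_rel_eq.2 h

instance [Subsingleton α] : Subsingleton (Setoid α) :=
  ⟨fun s t => ext fun a b => by
    rw [Subsingleton.elim a b]
    exact iff_of_true (s.refl' b) (t.refl' b)⟩

theorem eq_of_saturated {s t : Setoid α} {L : Set α} (hs : ∀ ⦃a b⦄, s a b → a ∈ L → b ∈ L)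
    (ht : ∀ ⦃a b⦄, t a b → a ∈ L → b ∈ L)
    (hin : s.comap ((↑) : L → α) = t.comap (↑)) (hout : s.comap ((↑) : ↥Lᶜ → α) = t.comap (↑)) :
    s = t := by
  ext a b
  by_cases ha : a ∈ L <;> by_cases hb : b ∈ L
  · exact Setoid.ext_iff.1 hin ⟨a, ha⟩ ⟨b, hb⟩
  · exact iff_of_false (fun h => hb (hs h ha)) (fun h => hb (ht h ha))
  · exact iff_of_false (fun h => ha (hs (s.symm' h) hb)) (fun h => ha (ht (t.symm' h) hb))
  · exact Setoid.ext_iff.1 hout ⟨a, ha⟩ ⟨b, hb⟩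

end Setoid

namespace Finpartition

variable {α : Type*} [Fintype α] [DecidableEq α]

def toSetoid (P : Finpartition (univ : Finset α)) : Setoid α := Setoid.ker P.part

theorem toSetoid_iff_mem_part {P : Finpartition (univ : Finset α)} {a b : α} :
    P.toSetoid a b ↔ b ∈ P.part a :=
  (P.mem_part_iff_part_eq_part (mem_univ b) (mem_univ a)).trans eq_comm |>.symm

theorem ext_part {P Q : Finpartition (univ : Finset α)} (h : ∀ a, P.part a = Q.part a) :
    P = Q := by
  ext t
  constructor <;> intro ht <;> obtain ⟨a, ha⟩ := nonempty_of_mem_parts _ ht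
  · rw [← P.part_eq_of_mem ht ha, h]
    exact Q.part_mem.2 (mem_univ a)
  · rw [← Q.part_eq_of_mem ht ha, ← h]
    exact P.part_mem.2 (mem_univ a)

open Classical in
noncomputable def equivSetoid : Finpartition (univ : Finset α) ≃ Setoid α where
  toFun := toSetoid
  invFun s := ofSetoid s
  left_inv P := ext_part fun a => by
    ext b
    rw [mem_part_ofSetoid_iff_rel, toSetoid_iff_mem_part]
  right_inv s := by
    ext a b
    rw [toSetoid_iff_mem_part, mem_part_ofSetoid_iff_rel]

end Finpartition

theorem noncrossing_iff_isNoncrossing_toSetoid {n : ℕ}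
    (π : Finpartition (univ : Finset (Fin n))) : Noncrossing π ↔ π.toSetoid.IsNoncrossing := by
  have part_mem (a : Fin n) : π.part a ∈ π.parts := π.part_mem.2 (mem_univ a)
  have mem_part (a : Fin n) : a ∈ π.part a := π.mem_part (mem_univ a)
  constructor
  · intro h a b c d hab hbc hcd (hac : π.part a = π.part c) (hbd : π.part b = π.part d)
    exact h _ (part_mem a) _ (part_mem b) a b c d hab hbc hcd (mem_part a) (hac ▸ mem_part c)
      (mem_part b) (hbd ▸ mem_part d)
  · intro h B hB C hC a b c d hab hbc hcd haB hcB hbC hdC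
    obtain rfl := π.part_eq_of_mem hB haB
    obtain rfl := π.part_eq_of_mem hC hbC
    exact h hab hbc hcd (π.part_eq_of_mem hB hcB).symm (π.part_eq_of_mem hC hdC).symm

abbrev NoncrossingSetoid (m : ℕ) : Type := {s : Setoid (Fin m) // s.IsNoncrossing}

namespace NoncrossingSetoid

variable {n i : ℕ}

def enclosed (n i : ℕ) : Set (Fin (n + 1)) := {a | 0 < a.val ∧ a.val ≤ i}

theorem mem_enclosed {a : Fin (n + 1)} : a ∈ enclosed n i ↔ 0 < a.val ∧ a.val ≤ i := Iff.rfl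

instance : DecidablePred (· ∈ enclosed n i) := fun _ => decidable_of_iff' _ mem_enclosed

theorem ordConnected_enclosed : (enclosed n i).OrdConnected :=
  ⟨fun a ha b hb c hc => by
    simp only [mem_enclosed, Set.mem_Icc, Fin.le_def] at ha hb hc ⊢
    omega⟩

theorem subsingleton_compl_enclosed (h : ¬ i < n) : Subsingleton ↥(enclosed n i)ᶜ :=
  ⟨fun a b => by
    have ha := a.2; have hb := b.2
    simp only [Set.mem_compl_iff, mem_enclosed] at ha hb
    exact Subtype.ext (Fin.ext (by omega))⟩

def lowEmb (hi : i ≤ n) (x : Fin i) : Fin (n + 1) := ⟨x + 1, by omega⟩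

def highEmb (n i : ℕ) (y : Fin (n - i)) : Fin (n + 1) := ⟨y + i + 1, by omega⟩

def lowProj (a : enclosed n i) : Fin i := ⟨a.1 - 1, by have := mem_enclosed.1 a.2; omega⟩

/-- Truncated subtraction: `highProj h 0 = 0 = highProj h (i + 1)`. -/
def highProj (h : i < n) (a : Fin (n + 1)) : Fin (n - i) := ⟨a - (i + 1), by omega⟩

theorem monotone_lowEmb (hi : i ≤ n) : Monotone (lowEmb hi) := fun x y hxy => by
  simp only [lowEmb, Fin.le_def] at hxy ⊢
  omega

theorem monotone_highEmb : Monotone (highEmb n i) := fun x y hxy => by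
  simp only [highEmb, Fin.le_def] at hxy ⊢
  omega

theorem monotone_lowProj : Monotone (lowProj (n := n) (i := i)) := fun _ _ hab =>
  Fin.le_def.2 (Nat.sub_le_sub_right (Fin.le_def.1 hab) 1)

theorem monotone_highProj (h : i < n) : Monotone (highProj h) := fun a b hab => by
  simp only [highProj, Fin.le_def] at hab ⊢
  omega

theorem lowEmb_mem_enclosed (hi : i ≤ n) (x : Fin i) : lowEmb hi x ∈ enclosed n i :=
  mem_enclosed.2 ⟨Nat.succ_pos x, x.isLt⟩

theorem highEmb_notMem_enclosed (y : Fin (n - i)) : highEmb n i y ∉ enclosed n i := by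
  simp only [mem_enclosed, highEmb]
  omega

theorem lowEmb_comp_lowProj (hi : i ≤ n) :
    lowEmb hi ∘ lowProj = ((↑) : enclosed n i → Fin (n + 1)) :=
  funext fun a => Fin.ext <| by
    have := mem_enclosed.1 a.2
    simp only [Function.comp_apply, lowEmb, lowProj]
    omega

theorem highProj_highEmb (h : i < n) (y : Fin (n - i)) : highProj h (highEmb n i y) = y :=
  Fin.ext (by simp only [highProj, highEmb]; omega)

/-- `0` is glued to the block of `i + 1`, the first point of the second part, or stays a
singleton when that part is empty. -/
def glueFun (s₁ : Setoid (Fin i)) (s₂ : Setoid (Fin (n - i))) (a : Fin (n + 1)) :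
    Quotient s₁ ⊕ Option (Quotient s₂) :=
  if ha : a ∈ enclosed n i then .inl ⟦lowProj ⟨a, ha⟩⟧
  else if h : i < n then .inr (some ⟦highProj h a⟧) else .inr none

def glue (s₁ : Setoid (Fin i)) (s₂ : Setoid (Fin (n - i))) : Setoid (Fin (n + 1)) :=
  Setoid.ker (glueFun s₁ s₂)

variable {s₁ : Setoid (Fin i)} {s₂ : Setoid (Fin (n - i))}

theorem glue_iff {a b : Fin (n + 1)} : glue s₁ s₂ a b ↔ glueFun s₁ s₂ a = glueFun s₁ s₂ b :=
  Iff.rfl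

theorem glueFun_of_mem {a : Fin (n + 1)} (ha : a ∈ enclosed n i) :
    glueFun s₁ s₂ a = .inl ⟦lowProj ⟨a, ha⟩⟧ :=
  dif_pos ha

theorem glueFun_of_notMem {a : Fin (n + 1)} (ha : a ∉ enclosed n i) (h : i < n) :
    glueFun s₁ s₂ a = .inr (some ⟦highProj h a⟧) := by
  rw [glueFun, dif_neg ha, dif_pos h]

theorem mem_enclosed_of_glue {a b : Fin (n + 1)} (hab : glue s₁ s₂ a b)
    (ha : a ∈ enclosed n i) : b ∈ enclosed n i := by
  by_contra hb
  rw [glue_iff, glueFun_of_mem ha, glueFun, dif_neg hb] at hab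
  split_ifs at hab

theorem comap_val_glue :
    (glue s₁ s₂).comap ((↑) : enclosed n i → Fin (n + 1)) = s₁.comap lowProj := by
  ext a b
  rw [Setoid.comap_rel, glue_iff, glueFun_of_mem a.2, glueFun_of_mem b.2, Sum.inl.injEq,
    Quotient.eq]
  rfl

theorem comap_val_compl_glue (h : i < n) :
    (glue s₁ s₂).comap ((↑) : ↥(enclosed n i)ᶜ → Fin (n + 1)) = s₂.comap (highProj h ∘ (↑)) := by
  ext a b
  rw [Setoid.comap_rel, glue_iff, glueFun_of_notMem a.2 h, glueFun_of_notMem b.2 h,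
    Sum.inr.injEq, Option.some.injEq, Quotient.eq]
  rfl

theorem isNoncrossing_glue (h₁ : s₁.IsNoncrossing) (h₂ : s₂.IsNoncrossing) :
    (glue s₁ s₂).IsNoncrossing := by
  refine Setoid.isNoncrossing_of_ordConnected ordConnected_enclosed
    (fun _ _ => mem_enclosed_of_glue) ?_ ?_
  · rw [comap_val_glue]
    exact h₁.comap monotone_lowProj
  · by_cases h : i < n
    · rw [comap_val_compl_glue h]
      exact h₂.comap ((monotone_highProj h).comp (Subtype.mono_coe _))
    · have := subsingleton_compl_enclosed h
      exact Setoid.isNoncrossing_of_subsingleton _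

theorem comap_lowEmb_glue (hi : i ≤ n) : (glue s₁ s₂).comap (lowEmb hi) = s₁ := by
  ext x y
  rw [Setoid.comap_rel, glue_iff, glueFun_of_mem (lowEmb_mem_enclosed hi x),
    glueFun_of_mem (lowEmb_mem_enclosed hi y), Sum.inl.injEq, Quotient.eq]
  rfl

theorem comap_highEmb_glue : (glue s₁ s₂).comap (highEmb n i) = s₂ := by
  ext x y
  have h : i < n := by have := x.isLt; omega
  rw [Setoid.comap_rel, glue_iff, glueFun_of_notMem (highEmb_notMem_enclosed x) h,
    glueFun_of_notMem (highEmb_notMem_enclosed y) h, Sum.inr.injEq, Option.some.injEq,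
    Quotient.eq, highProj_highEmb, highProj_highEmb]

/-- `i + 1` is the least positive element of the block of `0`, and `i = n` if that block is
`{0}`. -/
def IsFirstPartner (s : Setoid (Fin (n + 1))) (i : ℕ) : Prop :=
  i ≤ n ∧ (∀ a ∈ enclosed n i, ¬ s 0 a) ∧ ∀ h : i < n, s 0 ⟨i + 1, by omega⟩

theorem isFirstPartner_glue (hi : i ≤ n) : IsFirstPartner (glue s₁ s₂) i := by
  refine ⟨hi, fun a ha h0a => ?_, fun h => ?_⟩
  · exact (mem_enclosed.1 (mem_enclosed_of_glue ((glue s₁ s₂).symm' h0a) ha)).1.ne rfl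
  · rw [glue_iff, glueFun_of_notMem (by simp [mem_enclosed]) h,
      glueFun_of_notMem (by simp [mem_enclosed]) h]
    congr 3
    exact Fin.ext (by simp [highProj])

theorem IsFirstPartner.unique {s : Setoid (Fin (n + 1))} {j : ℕ} (hi : IsFirstPartner s i)
    (hj : IsFirstPartner s j) : i = j := by
  wlog hij : i < j generalizing i j
  · rcases (not_lt.1 hij).lt_or_eq with h | h
    · exact (this hj hi h).symm
    · exact h.symm
  have hin : i < n := by have := hj.1; omega
  exact (hj.2.1 ⟨i + 1, by omega⟩ (mem_enclosed.2 ⟨Nat.succ_pos i, hij⟩) (hi.2.2 hin)).elim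

theorem exists_isFirstPartner (s : Setoid (Fin (n + 1))) : ∃ i, IsFirstPartner s i := by
  classical
  have hP : ∃ k, k ≤ n ∧ ∀ h : k < n, s 0 ⟨k + 1, by omega⟩ :=
    ⟨n, le_rfl, fun h => absurd h (lt_irrefl n)⟩
  refine ⟨Nat.find hP, (Nat.find_spec hP).1, fun a ha h0a => ?_, (Nat.find_spec hP).2⟩
  have ha := mem_enclosed.1 ha
  refine Nat.find_min hP (m := a - 1) (by omega) ⟨by omega, fun _ => ?_⟩
  convert h0a
  omega

variable {s : Setoid (Fin (n + 1))}

theorem IsFirstPartner.mem_enclosed_of_rel (hs : s.IsNoncrossing) (hi : IsFirstPartner s i)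
    {a b : Fin (n + 1)} (hab : s a b) (ha : a ∈ enclosed n i) : b ∈ enclosed n i := by
  obtain ⟨-, hsep, hnext⟩ := hi
  have ha' := mem_enclosed.1 ha
  by_contra hb
  rw [mem_enclosed] at hb
  apply hsep a ha
  by_cases hb0 : b = 0
  · exact s.symm' (hb0 ▸ hab)
  · have hib : i + 1 ≤ b.val := by have := Fin.pos_iff_ne_zero.2 hb0; omega
    have hin : i < n := by have := b.isLt; omega
    rcases (show (⟨i + 1, by omega⟩ : Fin (n + 1)) ≤ b from Fin.le_def.2 hib).lt_or_eq
      with hcb | hcb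
    · exact hs (Fin.lt_def.2 ha'.1) (Fin.lt_def.2 (by simp only; omega)) hcb (hnext hin) hab
    · exact s.trans' (hnext hin) (hcb ▸ s.symm' hab)

theorem IsFirstPartner.rel_highEmb_highProj (hi : IsFirstPartner s i) (h : i < n)
    {a : Fin (n + 1)} (ha : a ∉ enclosed n i) : s (highEmb n i (highProj h a)) a := by
  rw [mem_enclosed] at ha
  by_cases ha0 : a.val = 0
  · have : highEmb n i (highProj h a) = ⟨i + 1, by omega⟩ :=
      Fin.ext (by simp only [highEmb, highProj]; omega)
    rw [this, show a = 0 from Fin.ext ha0]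
    exact s.symm' (hi.2.2 h)
  · rw [show highEmb n i (highProj h a) = a from Fin.ext (by simp only [highEmb, highProj]; omega)]

theorem IsFirstPartner.glue_comap_eq (hs : s.IsNoncrossing) (hi : IsFirstPartner s i) :
    glue (s.comap (lowEmb hi.1)) (s.comap (highEmb n i)) = s := by
  refine Setoid.eq_of_saturated (fun _ _ => mem_enclosed_of_glue)
    (fun _ _ => hi.mem_enclosed_of_rel hs) ?_ ?_
  · rw [comap_val_glue, ← Setoid.comap_comp, lowEmb_comp_lowProj]
  · by_cases h : i < n
    · rw [comap_val_compl_glue h]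
      ext a b
      have ha := hi.rel_highEmb_highProj h a.2
      have hb := hi.rel_highEmb_highProj h b.2
      simp only [Setoid.comap_rel, Function.comp_apply]
      exact ⟨fun hab => s.trans' (s.symm' ha) (s.trans' hab hb),
        fun hab => s.trans' ha (s.trans' hab (s.symm' hb))⟩
    · have := subsingleton_compl_enclosed h
      exact Subsingleton.elim _ _

def glueMap (n : ℕ) (p : Σ i : Fin (n + 1), NoncrossingSetoid i × NoncrossingSetoid (n - i)) :
    NoncrossingSetoid (n + 1) :=
  ⟨glue p.2.1.1 p.2.2.1, isNoncrossing_glue p.2.1.2 p.2.2.2⟩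

theorem glueMap_injective (n : ℕ) : Function.Injective (glueMap n) := by
  rintro ⟨i, s₁, s₂⟩ ⟨j, t₁, t₂⟩ h
  have h : glue s₁.1 s₂.1 = glue t₁.1 t₂.1 := congrArg Subtype.val h
  obtain rfl : i = j :=
    Fin.ext ((isFirstPartner_glue i.is_le).unique (h ▸ isFirstPartner_glue j.is_le))
  obtain rfl : s₁ = t₁ := Subtype.ext <| by
    rw [← comap_lowEmb_glue i.is_le (s₁ := s₁.1) (s₂ := s₂.1), h, comap_lowEmb_glue]
  obtain rfl : s₂ = t₂ := Subtype.ext <| by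
    rw [← comap_highEmb_glue (s₁ := s₁.1) (s₂ := s₂.1), h, comap_highEmb_glue]
  rfl

theorem glueMap_surjective (n : ℕ) : Function.Surjective (glueMap n) := by
  rintro ⟨s, hs⟩
  obtain ⟨i, hi⟩ := exists_isFirstPartner s
  exact ⟨⟨⟨i, Nat.lt_succ_of_le hi.1⟩, ⟨_, hs.comap (monotone_lowEmb hi.1)⟩,
    ⟨_, hs.comap monotone_highEmb⟩⟩, Subtype.ext (hi.glue_comap_eq hs)⟩

theorem card_eq_catalan (m : ℕ) : Nat.card (NoncrossingSetoid m) = catalan m := by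
  induction m using Nat.strong_induction_on with
  | _ m ih =>
  cases m with
  | zero =>
    rw [catalan_zero, Nat.card_eq_one_iff_unique]
    exact ⟨inferInstance, ⟨⊥, Setoid.isNoncrossing_of_subsingleton _⟩⟩
  | succ n =>
    rw [← Nat.card_eq_of_bijective _ ⟨glueMap_injective n, glueMap_surjective n⟩,
      Nat.card_sigma, catalan_succ]
    refine Finset.sum_congr rfl fun i _ => ?_
    rw [Nat.card_prod, ih i i.is_lt, ih (n - i) (by omega)]

end NoncrossingSetoid

/-- The number of noncrossing set partitions of `[n]` equals the Catalan number
`Cat(n) = (1/(n+1))·binom(2n,n)` (stated in the cleared-denominator form). -/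
theorem noncrossing_card_eq_catalan (n : ℕ) :
    (n + 1) * Nat.card {π : Finpartition (Finset.univ : Finset (Fin n)) // Noncrossing π}
      = (2 * n).choose n := by
  have e : {π : Finpartition (univ : Finset (Fin n)) // Noncrossing π} ≃ NoncrossingSetoid n :=
    Finpartition.equivSetoid.subtypeEquiv noncrossing_iff_isNoncrossing_toSetoid
  rw [Nat.card_congr e, NoncrossingSetoid.card_eq_catalan, succ_mul_catalan_eq_centralBinom,
    Nat.centralBinom]
end

section
/- For any nonempty subsets A, B of [n], the block operators ρ_A and ρ_B on the exterior algebra Λ{Θ_n,Ξ_n} commute: ρ_A ∘ ρ_B = ρ_B ∘ ρ_A. -/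
open Finset

/-- The index set for the `2n` fermionic generators `θ₁,…,θₙ,ξ₁,…,ξₙ`:
`Sum.inl i` is `θ_i`, `Sum.inr i` is `ξ_i`. -/
abbrev Gen (n : ℕ) := Fin n ⊕ Fin n

/-- The position of a generator in the fixed order `θ₁ < ⋯ < θₙ < ξ₁ < ⋯ < ξₙ`. -/
def gidx {n : ℕ} : Gen n → ℕ
  | .inl i => (i : ℕ)
  | .inr i => n + (i : ℕ)

/-- The exterior algebra `∧{Θ_n, Ξ_n}` over `ℂ`, modeled by coefficient functions
on the basis of monomials `θ_S · ξ_T`, a monomial being indexed by a subset of the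
`2n` generators. -/
abbrev ExtA (n : ℕ) := Finset (Gen n) → ℂ

/-- The basis monomial indexed by a set of generators (product taken in the fixed order). -/
noncomputable def emon {n : ℕ} (S : Finset (Gen n)) : ExtA n := fun T => if T = S then 1 else 0

/-- The generator `θ_i`. -/
noncomputable def theta {n : ℕ} (i : Fin n) : ExtA n := emon {Sum.inl i}

/-- The generator `ξ_i`. -/
noncomputable def xi {n : ℕ} (i : Fin n) : ExtA n := emon {Sum.inr i}

/-- The sign `(-1)^{#inversions}` obtained when concatenating the sorted monomial on `S`
with the sorted monomial on `T` and re-sorting. -/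
noncomputable def msign {n : ℕ} (S T : Finset (Gen n)) : ℂ :=
  (-1 : ℂ) ^ (((S ×ˢ T).filter (fun p => gidx p.2 < gidx p.1)).card)

/-- Multiplication in the exterior algebra `∧{Θ_n, Ξ_n}`. -/
noncomputable def emul {n : ℕ} (f g : ExtA n) : ExtA n :=
  fun U => ∑ S ∈ U.powerset, msign S (U \ S) * f S * g (U \ S)

/-- The inner product on `∧{Θ_n, Ξ_n}` making the monomials `θ_S · ξ_T` orthonormal. -/
noncomputable def einner {n : ℕ} (f g : ExtA n) : ℂ :=
  ∑ S : Finset (Gen n), f S * g S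

/-- The contraction (exterior differentiation) action `f ⊙ h`: on generators,
`ω_i ⊙ (ω_{j_1} ⋯ ω_{j_r})` removes `ω_i` with the sign `(-1)^{s-1}` if `j_s = i`
and gives `0` otherwise, extended bilinearly (on a monomial `ω_S`, it is the
composite of the single contractions). -/
noncomputable def odot {n : ℕ} (f h : ExtA n) : ExtA n :=
  fun T => ∑ S : Finset (Gen n), if Disjoint S T then msign S T * f S * h (S ∪ T) else 0

/-- The sign produced when the permutation `w` reorders the (sorted) monomial on `S`. -/
noncomputable def actsign {n : ℕ} (w : Equiv.Perm (Fin n)) (S : Finset (Gen n)) : ℂ :=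
  (-1 : ℂ) ^ (((S ×ˢ S).filter (fun p =>
      gidx p.1 < gidx p.2 ∧
        gidx (Equiv.sumCongr w w p.2) < gidx (Equiv.sumCongr w w p.1))).card)

/-- The diagonal action of a permutation `w ∈ S_n` on `∧{Θ_n, Ξ_n}`:
`w · θ_i = θ_{w(i)}`, `w · ξ_i = ξ_{w(i)}`, extended as an algebra automorphism. -/
noncomputable def pact {n : ℕ} (w : Equiv.Perm (Fin n)) (f : ExtA n) : ExtA n :=
  fun T =>
    actsign w (T.map (Equiv.sumCongr w w).symm.toEmbedding) *
      f (T.map (Equiv.sumCongr w w).symm.toEmbedding)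

/-- The block operator `ρ_B`: for `|B| > 1`, `ρ_B(f) = ∑_{i ≠ j ∈ B} ξ_i · (θ_j ⊙ f)`;
for `B = {i}`, `ρ_B(f) = ξ_i · (θ_i ⊙ f)`. -/
noncomputable def rho {n : ℕ} (B : Finset (Fin n)) (f : ExtA n) : ExtA n :=
  if 1 < B.card then
    ∑ i ∈ B, ∑ j ∈ B.erase i, emul (xi i) (odot (theta j) f)
  else
    ∑ i ∈ B, emul (xi i) (odot (theta i) f)

/-- The operator `ψ_B`, equal to `ρ_B` when `|B| > 1` and `0` when `|B| ≤ 1`. -/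
noncomputable def psi {n : ℕ} (B : Finset (Fin n)) (f : ExtA n) : ExtA n :=
  if 1 < B.card then rho B f else 0

/-- The two-set operator `ψ_{A,B}(f) = ∑_{a ∈ A, b ∈ B} [ξ_a·(θ_b ⊙ f) + ξ_b·(θ_a ⊙ f)]`. -/
noncomputable def psiPair {n : ℕ} (A B : Finset (Fin n)) (f : ExtA n) : ExtA n :=
  ∑ a ∈ A, ∑ b ∈ B, (emul (xi a) (odot (theta b) f) + emul (xi b) (odot (theta a) f))

/-- The composite operator `ρ_π = ρ_{B_1} ∘ ⋯ ∘ ρ_{B_k}` over the blocks of `π`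
(the order of composition is immaterial since block operators commute). -/
noncomputable def rhoPartition {n : ℕ} (π : Finpartition (Finset.univ : Finset (Fin n))) :
    ExtA n → ExtA n :=
  π.parts.toList.foldr (fun B g => rho B ∘ g) id

/-- The top monomial `θ_1 θ_2 ⋯ θ_n`. -/
noncomputable def topTheta (n : ℕ) : ExtA n :=
  emon ((Finset.univ : Finset (Fin n)).image Sum.inl)

/-- The fermion `F_π := ρ_π(θ_1 θ_2 ⋯ θ_n)` attached to a set partition `π` of `[n]`. -/
noncomputable def Fperm {n : ℕ} (π : Finpartition (Finset.univ : Finset (Fin n))) : ExtA n :=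
  rhoPartition π (topTheta n)

/-- The fermion `f_π := (ξ_1 + ⋯ + ξ_n) ⊙ F_π`. -/
noncomputable def fperm {n : ℕ} (π : Finpartition (Finset.univ : Finset (Fin n))) : ExtA n :=
  odot (∑ i : Fin n, xi i) (Fperm π)

lemma msign_singleton {n : ℕ} (x : Gen n) (T : Finset (Gen n)) :
    msign {x} T = (-1 : ℂ) ^ ((T.filter fun t => gidx t < gidx x).card) := by
  unfold msign
  rw [Finset.singleton_product, Finset.filter_map, Finset.card_map]
  rfl

lemma msign_erase_ge {n : ℕ} (x y : Gen n) (T : Finset (Gen n)) (h : gidx x ≤ gidx y) :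
    msign {x} (T.erase y) = msign {x} T := by
  rw [msign_singleton, msign_singleton, Finset.filter_erase, Finset.erase_eq_of_notMem]
  simp only [Finset.mem_filter, not_and]
  intro _; omega

lemma msign_insert_lt {n : ℕ} (x y : Gen n) (T : Finset (Gen n)) (hy : y ∉ T)
    (h : gidx y < gidx x) : msign {x} (insert y T) = -msign {x} T := by
  rw [msign_singleton, msign_singleton, Finset.filter_insert, if_pos h,
    Finset.card_insert_of_notMem (fun hc => hy (Finset.mem_filter.mp hc).1), pow_succ]
  ring

lemma msign_insert_ge {n : ℕ} (x y : Gen n) (T : Finset (Gen n))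
    (h : gidx x ≤ gidx y) : msign {x} (insert y T) = msign {x} T := by
  rw [msign_singleton, msign_singleton, Finset.filter_insert, if_neg (by omega)]

lemma msign_erase_lt {n : ℕ} (x y : Gen n) (T : Finset (Gen n)) (hy : y ∈ T)
    (h : gidx y < gidx x) : msign {x} (T.erase y) = -msign {x} T := by
  have h2 : msign {x} (insert y (T.erase y)) = -msign {x} (T.erase y) :=
    msign_insert_lt x y _ (Finset.notMem_erase y T) h
  rw [Finset.insert_erase hy] at h2
  rw [h2]; ring

lemma emul_xi {n : ℕ} (i : Fin n) (g : ExtA n) :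
    emul (xi i) g = fun U => if (Sum.inr i : Gen n) ∈ U then
      msign {Sum.inr i} (U.erase (Sum.inr i)) * g (U.erase (Sum.inr i)) else 0 := by
  funext U
  unfold emul xi emon
  rw [Finset.sum_congr rfl (fun S _ => show
      msign S (U \ S) * (if S = {Sum.inr i} then (1:ℂ) else 0) * g (U \ S)
        = if S = {Sum.inr i} then msign S (U \ S) * g (U \ S) else 0 by
    split <;> simp)]
  rw [Finset.sum_ite_eq' U.powerset {Sum.inr i} (fun S => msign S (U \ S) * g (U \ S))]
  simp [Finset.sdiff_singleton_eq_erase]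

lemma odot_theta {n : ℕ} (j : Fin n) (f : ExtA n) :
    odot (theta j) f = fun T => if (Sum.inl j : Gen n) ∈ T then 0 else
      msign {Sum.inl j} T * f (insert (Sum.inl j) T) := by
  funext T
  unfold odot theta emon
  rw [Finset.sum_congr rfl (fun S _ => show
      (if Disjoint S T then msign S T * (if S = {Sum.inl j} then (1:ℂ) else 0) * f (S ∪ T) else 0)
        = if S = {Sum.inl j} then (if Disjoint S T then msign S T * f (S ∪ T) else 0) else 0 by
    by_cases h : S = {Sum.inl j} <;> split <;> simp [h])]
  rw [Finset.sum_ite_eq' Finset.univ {Sum.inl j}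
      (fun S => if Disjoint S T then msign S T * f (S ∪ T) else 0)]
  simp only [Finset.mem_univ, if_pos, Finset.disjoint_singleton_left, ← Finset.insert_eq]
  by_cases h : (Sum.inl j : Gen n) ∈ T <;> simp [h]

lemma emul_neg {n : ℕ} (g h : ExtA n) : emul g (-h) = -(emul g h) := by
  funext U
  simp only [emul, Pi.neg_apply, mul_neg, ← Finset.sum_neg_distrib]

lemma odot_neg {n : ℕ} (g h : ExtA n) : odot g (-h) = -(odot g h) := by
  funext T
  simp only [odot, Pi.neg_apply, mul_neg, ← Finset.sum_neg_distrib]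
  exact Finset.sum_congr rfl fun S _ => by split <;> simp

lemma emul_sum {n : ℕ} {ι : Type*} (s : Finset ι) (g : ExtA n) (h : ι → ExtA n) :
    emul g (∑ t ∈ s, h t) = ∑ t ∈ s, emul g (h t) := by
  funext U
  simp only [emul, Finset.sum_apply, Finset.mul_sum]
  rw [Finset.sum_comm]

lemma odot_sum {n : ℕ} {ι : Type*} (s : Finset ι) (g : ExtA n) (h : ι → ExtA n) :
    odot g (∑ t ∈ s, h t) = ∑ t ∈ s, odot g (h t) := by
  funext T
  simp only [odot, Finset.sum_apply, Finset.mul_sum]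
  rw [Finset.sum_congr rfl (fun S _ => show _ = ∑ t ∈ s,
      (if Disjoint S T then msign S T * g S * h t (S ∪ T) else 0) by split <;> simp)]
  rw [Finset.sum_comm]

lemma gidx_inl {n : ℕ} (j : Fin n) : gidx (Sum.inl j : Gen n) = (j : ℕ) := rfl
lemma gidx_inr {n : ℕ} (i : Fin n) : gidx (Sum.inr i : Gen n) = n + (i : ℕ) := rfl

lemma theta_xi_anticomm {n : ℕ} (i j : Fin n) (f : ExtA n) :
    odot (theta j) (emul (xi i) f) = -(emul (xi i) (odot (theta j) f)) := by
  funext T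
  simp only [odot_theta, emul_xi, Pi.neg_apply]
  by_cases hj : (Sum.inl j : Gen n) ∈ T
  · rw [if_pos hj]
    by_cases hi : (Sum.inr i : Gen n) ∈ T
    · rw [if_pos hi, if_pos (Finset.mem_erase.mpr ⟨by simp, hj⟩)]; ring
    · rw [if_neg hi]; ring
  · rw [if_neg hj]
    by_cases hi : (Sum.inr i : Gen n) ∈ T
    · rw [if_pos (Finset.mem_insert_of_mem hi), if_pos hi,
        if_neg (fun hc => hj (Finset.mem_of_mem_erase hc)),
        Finset.erase_insert_of_ne (by simp),
        msign_erase_ge (Sum.inl j) (Sum.inr i) T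
          (by rw [gidx_inl, gidx_inr]; exact le_of_lt (lt_of_lt_of_le j.isLt (Nat.le_add_right n i))),
        msign_insert_lt (Sum.inr i) (Sum.inl j) (T.erase (Sum.inr i))
          (fun hc => hj (Finset.mem_of_mem_erase hc))
          (by rw [gidx_inl, gidx_inr]; exact lt_of_lt_of_le j.isLt (Nat.le_add_right n i))]
      ring
    · rw [if_neg (by simp [hi]), if_neg hi]; ring

lemma xi_xi_anticomm {n : ℕ} (i k : Fin n) (g : ExtA n) :
    emul (xi i) (emul (xi k) g) = -(emul (xi k) (emul (xi i) g)) := by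
  funext U
  simp only [emul_xi, Pi.neg_apply]
  by_cases hi : (Sum.inr i : Gen n) ∈ U
  · by_cases hk : (Sum.inr k : Gen n) ∈ U
    · by_cases hik : i = k
      · subst hik
        rw [if_pos hi, if_neg (Finset.notMem_erase _ U)]
        ring
      · have hne : (Sum.inr k : Gen n) ≠ Sum.inr i := by simp only [ne_eq, Sum.inr.injEq]; exact fun h : k = i => hik h.symm
        have hne' : (Sum.inr i : Gen n) ≠ Sum.inr k := by simp only [ne_eq, Sum.inr.injEq]; exact hik
        rw [if_pos hi, if_pos hk, if_pos (Finset.mem_erase.mpr ⟨hne, hk⟩),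
          if_pos (Finset.mem_erase.mpr ⟨hne', hi⟩),
          msign_erase_ge (Sum.inr i) (Sum.inr i) U le_rfl,
          msign_erase_ge (Sum.inr k) (Sum.inr k) U le_rfl,
          msign_erase_ge (Sum.inr k) (Sum.inr k) (U.erase (Sum.inr i)) le_rfl,
          msign_erase_ge (Sum.inr i) (Sum.inr i) (U.erase (Sum.inr k)) le_rfl,
          show (U.erase (Sum.inr k)).erase (Sum.inr i) = (U.erase (Sum.inr i)).erase (Sum.inr k)
            from Finset.erase_right_comm]
        rcases lt_or_gt_of_ne (show (i:ℕ) ≠ (k:ℕ) from fun h => hik (Fin.ext h)) with h | h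
        · rw [msign_erase_lt (Sum.inr k) (Sum.inr i) U hi
              (by rw [gidx_inr, gidx_inr]; omega),
            msign_erase_ge (Sum.inr i) (Sum.inr k) U
              (by rw [gidx_inr, gidx_inr]; omega)]
          ring
        · rw [msign_erase_lt (Sum.inr i) (Sum.inr k) U hk
              (by rw [gidx_inr, gidx_inr]; omega),
            msign_erase_ge (Sum.inr k) (Sum.inr i) U
              (by rw [gidx_inr, gidx_inr]; omega)]
          ring
    · rw [if_pos hi, if_neg hk, if_neg (fun hc => hk (Finset.mem_of_mem_erase hc))]; ring
  · by_cases hk : (Sum.inr k : Gen n) ∈ U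
    · rw [if_neg hi, if_pos hk, if_neg (fun hc => hi (Finset.mem_of_mem_erase hc))]; ring
    · rw [if_neg hi, if_neg hk]; ring

lemma theta_theta_anticomm {n : ℕ} (j l : Fin n) (f : ExtA n) :
    odot (theta j) (odot (theta l) f) = -(odot (theta l) (odot (theta j) f)) := by
  funext T
  simp only [odot_theta, Pi.neg_apply]
  by_cases hj : (Sum.inl j : Gen n) ∈ T
  · rw [if_pos hj]
    by_cases hl : (Sum.inl l : Gen n) ∈ T
    · rw [if_pos hl]; ring
    · rw [if_neg hl, if_pos (Finset.mem_insert_of_mem hj)]; ring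
  · rw [if_neg hj]
    by_cases hl : (Sum.inl l : Gen n) ∈ T
    · rw [if_pos hl, if_pos (Finset.mem_insert_of_mem hl)]; ring
    · by_cases hjl : j = l
      · subst hjl
        rw [if_neg hl, if_pos (Finset.mem_insert_self _ _)]
        ring
      · have hne : (Sum.inl l : Gen n) ≠ Sum.inl j := by simp only [ne_eq, Sum.inl.injEq]; exact fun h : l = j => hjl h.symm
        have hne' : (Sum.inl j : Gen n) ≠ Sum.inl l := by simp only [ne_eq, Sum.inl.injEq]; exact hjl
        rw [if_neg hl, if_neg (by simp [hne, hl]), if_neg (by simp [hne', hj]),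
          show insert (Sum.inl l : Gen n) (insert (Sum.inl j) T)
              = insert (Sum.inl j) (insert (Sum.inl l) T) from Finset.insert_comm _ _ _]
        rcases lt_or_gt_of_ne (show (j:ℕ) ≠ (l:ℕ) from fun h => hjl (Fin.ext h)) with h | h
        · rw [msign_insert_lt (Sum.inl l) (Sum.inl j) T hj (by rw [gidx_inl, gidx_inl]; omega),
            msign_insert_ge (Sum.inl j) (Sum.inl l) T (by rw [gidx_inl, gidx_inl]; omega)]
          ring
        · rw [msign_insert_lt (Sum.inl j) (Sum.inl l) T hl (by rw [gidx_inl, gidx_inl]; omega),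
            msign_insert_ge (Sum.inl l) (Sum.inl j) T (by rw [gidx_inl, gidx_inl]; omega)]
          ring

noncomputable def Lop {n : ℕ} (i j : Fin n) (f : ExtA n) : ExtA n :=
  emul (xi i) (odot (theta j) f)

lemma Lop_comm {n : ℕ} (i j k l : Fin n) (f : ExtA n) :
    Lop i j (Lop k l f) = Lop k l (Lop i j f) := by
  have hL : Lop i j (Lop k l f)
      = -(emul (xi k) (emul (xi i) (odot (theta l) (odot (theta j) f)))) := by
    unfold Lop
    rw [theta_xi_anticomm k j, emul_neg, xi_xi_anticomm i k, neg_neg,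
      theta_theta_anticomm j l, emul_neg, emul_neg]
  have hR : Lop k l (Lop i j f)
      = -(emul (xi k) (emul (xi i) (odot (theta l) (odot (theta j) f)))) := by
    unfold Lop
    rw [theta_xi_anticomm i l, emul_neg]
  rw [hL, hR]

lemma Lop_sum {n : ℕ} {ι : Type*} (i j : Fin n) (s : Finset ι) (h : ι → ExtA n) :
    Lop i j (∑ t ∈ s, h t) = ∑ t ∈ s, Lop i j (h t) := by
  unfold Lop
  rw [odot_sum, emul_sum]

lemma rho_eq {n : ℕ} (B : Finset (Fin n)) (f : ExtA n) :
    rho B f = if 1 < B.card then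
      ∑ i ∈ B, ∑ j ∈ B.erase i, Lop i j f else ∑ i ∈ B, Lop i i f := rfl

lemma rho_sum {n : ℕ} {ι : Type*} (A : Finset (Fin n)) (s : Finset ι) (h : ι → ExtA n) :
    rho A (∑ t ∈ s, h t) = ∑ t ∈ s, rho A (h t) := by
  simp only [rho_eq]
  split_ifs with hc
  · simp only [Lop_sum]
    rw [Finset.sum_congr rfl (fun i (_ : i ∈ A) => Finset.sum_comm), Finset.sum_comm]
  · simp only [Lop_sum]
    rw [Finset.sum_comm]

lemma rho_Lop {n : ℕ} (A : Finset (Fin n)) (k l : Fin n) (f : ExtA n) :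
    rho A (Lop k l f) = Lop k l (rho A f) := by
  simp only [rho_eq]
  split_ifs with hc
  · simp only [Lop_sum]
    exact Finset.sum_congr rfl fun i _ => Finset.sum_congr rfl fun j _ => Lop_comm i j k l f
  · simp only [Lop_sum]
    exact Finset.sum_congr rfl fun i _ => Lop_comm i i k l f


/-- For any nonempty subsets `A, B ⊆ [n]`, the block operators `ρ_A` and `ρ_B` commute. -/
theorem rho_comm (n : ℕ) (A B : Finset (Fin n)) (hA : A.Nonempty) (hB : B.Nonempty)
    (f : ExtA n) :
    rho A (rho B f) = rho B (rho A f) := by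
  by_cases hc : 1 < B.card
  · calc rho A (rho B f)
        = rho A (∑ i ∈ B, ∑ j ∈ B.erase i, Lop i j f) := by rw [rho_eq B f, if_pos hc]
      _ = ∑ i ∈ B, rho A (∑ j ∈ B.erase i, Lop i j f) := rho_sum A B _
      _ = ∑ i ∈ B, ∑ j ∈ B.erase i, rho A (Lop i j f) :=
          Finset.sum_congr rfl fun i _ => rho_sum A _ _
      _ = ∑ i ∈ B, ∑ j ∈ B.erase i, Lop i j (rho A f) :=
          Finset.sum_congr rfl fun i _ => Finset.sum_congr rfl fun j _ => rho_Lop A i j f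
      _ = rho B (rho A f) := by rw [rho_eq B (rho A f), if_pos hc]
  · calc rho A (rho B f)
        = rho A (∑ i ∈ B, Lop i i f) := by rw [rho_eq B f, if_neg hc]
      _ = ∑ i ∈ B, rho A (Lop i i f) := rho_sum A B _
      _ = ∑ i ∈ B, Lop i i (rho A f) := Finset.sum_congr rfl fun i _ => rho_Lop A i i f
      _ = rho B (rho A f) := by rw [rho_eq B (rho A f), if_neg hc]
end

section
/- For every set partition π of [n] and every permutation w in S_n, the set-partition fermions satisfy w · F_π = sign(w) · F_{w(π)}, where w(π) is the set partition whose blocks are the images of the blocks of π under w. -/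
open Finset

/-! The sign with which `w` reorders a monomial is multiplicative on disjoint unions, up to the
shuffle signs before and after applying `w`. Hence `w` carries left multiplication by `ξ_i` and
contraction by `θ_j` to those by `ξ_{w i}` and `θ_{w j}`, and so intertwines `ρ_B` with
`ρ_{w(B)}`. The block operators are sums of products `ξ_i (θ_j ⊙ -)` of two odd operators, hence
commute, so the blocks of `w(π)` may be taken in any order. Finally `w` reorders `θ_1 ⋯ θ_n` with
the sign `(-1)^{#inversions of w} = sign w`. -/

namespace Fermion

lemma toList_image_perm {α β : Type*} [DecidableEq β] {f : α → β} {s : Finset α}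
    (hf : Set.InjOn f s) : (s.image f).toList.Perm (s.toList.map f) :=
  (List.perm_ext_iff_of_nodup (nodup_toList _)
    ((nodup_toList s).map_on fun a ha b hb => hf (mem_toList.1 ha) (mem_toList.1 hb))).2
    fun b => by simp

lemma neg_one_pow_card_filter {α : Type*} (s : Finset α) (p : α → Prop) [DecidablePred p] :
    (-1 : ℂ) ^ #{x ∈ s | p x} = ∏ x ∈ s, if p x then -1 else 1 := by
  rw [← prod_filter, prod_const]

lemma ite_lt_eq_neg_ite_gt {x y : ℕ} (hxy : x ≠ y) :
    (if x < y then (-1 : ℂ) else 1) = -(if y < x then -1 else 1) := by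
  rcases hxy.lt_or_gt with h | h <;> simp [h, h.not_gt]

lemma ite_and_mul_ite_and {x y u v : ℕ} (hxy : x ≠ y) (huv : u ≠ v) :
    (if x < y ∧ v < u then (-1 : ℂ) else 1) * (if y < x ∧ u < v then -1 else 1) =
      (if y < x then -1 else 1) * (if v < u then -1 else 1) := by
  rcases hxy.lt_or_gt with h | h <;> rcases huv.lt_or_gt with h' | h' <;>
    simp [h, h', h.not_gt, h'.not_gt]

variable {n : ℕ}

lemma gidx_injective : Function.Injective (gidx (n := n)) := by
  rintro (a | a) (b | b) h <;> simp only [gidx] at h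
  · exact congrArg Sum.inl (Fin.ext h)
  · exact absurd h (by omega)
  · exact absurd h (by omega)
  · exact congrArg Sum.inr (Fin.ext (by omega))

/-- The sign of sorting the product `ω_a · ω_T` of a generator and a monomial. -/
noncomputable def passSign (a : Gen n) (T : Finset (Gen n)) : ℂ :=
  (-1) ^ #{t ∈ T | gidx t < gidx a}

lemma passSign_mul_self (a : Gen n) (T : Finset (Gen n)) : passSign a T * passSign a T = 1 := by
  rw [passSign, ← pow_add]
  exact Even.neg_one_pow ⟨_, rfl⟩

lemma msign_singleton_left (a : Gen n) (T : Finset (Gen n)) : msign {a} T = passSign a T := by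
  rw [msign, passSign, singleton_product, filter_map, card_map]
  rfl

lemma passSign_insert {a b : Gen n} {T : Finset (Gen n)} (hb : b ∉ T) :
    passSign a (insert b T) = (if gidx b < gidx a then -1 else 1) * passSign a T := by
  rw [passSign, passSign, filter_insert]
  split_ifs with h
  · rw [card_insert_of_notMem (fun hc => hb (mem_filter.1 hc).1), pow_succ, mul_comm]
  · rw [one_mul]

lemma passSign_erase_self (a : Gen n) (T : Finset (Gen n)) :
    passSign a (T.erase a) = passSign a T := by
  rw [passSign, passSign, filter_erase, erase_eq_of_notMem (by simp)]

lemma passSign_erase {a c : Gen n} {T : Finset (Gen n)} (hc : c ∈ T) :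
    passSign a (T.erase c) = (if gidx c < gidx a then -1 else 1) * passSign a T := by
  rw [← insert_erase hc, passSign_insert (notMem_erase c T), erase_insert (notMem_erase c T),
    ← mul_assoc]
  split_ifs <;> norm_num

noncomputable def lmulGen (a : Gen n) : Module.End ℂ (ExtA n) where
  toFun g U := if a ∈ U then passSign a (U.erase a) * g (U.erase a) else 0
  map_add' f g := by funext U; simp only [Pi.add_apply]; split_ifs <;> ring
  map_smul' c g := by
    funext U; simp only [Pi.smul_apply, smul_eq_mul, RingHom.id_apply]; split_ifs <;> ring

noncomputable def contrGen (a : Gen n) : Module.End ℂ (ExtA n) where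
  toFun f T := if a ∈ T then 0 else passSign a T * f (insert a T)
  map_add' f g := by funext U; simp only [Pi.add_apply]; split_ifs <;> ring
  map_smul' c g := by
    funext U; simp only [Pi.smul_apply, smul_eq_mul, RingHom.id_apply]; split_ifs <;> ring

lemma lmulGen_apply (a : Gen n) (g : ExtA n) (U : Finset (Gen n)) :
    lmulGen a g U = if a ∈ U then passSign a (U.erase a) * g (U.erase a) else 0 := rfl

lemma contrGen_apply (a : Gen n) (f : ExtA n) (T : Finset (Gen n)) :
    contrGen a f T = if a ∈ T then 0 else passSign a T * f (insert a T) := rfl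

lemma emul_xi (i : Fin n) (g : ExtA n) : emul (xi i) g = lmulGen (.inr i) g := by
  funext U
  simp only [emul, xi, emon, mul_ite, mul_one, mul_zero, ite_mul, zero_mul, lmulGen_apply]
  rw [sum_ite_eq' U.powerset {Sum.inr i} (fun S => msign S (U \ S) * g (U \ S))]
  simp [sdiff_singleton_eq_erase, msign_singleton_left]

lemma odot_theta (j : Fin n) (f : ExtA n) : odot (theta j) f = contrGen (.inl j) f := by
  funext T
  have hS : ∀ S : Finset (Gen n), (if Disjoint S T then msign S T * emon {.inl j} S * f (S ∪ T)
      else 0) = if S = {.inl j} then (if .inl j ∈ T then 0 else passSign (.inl j) T *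
        f (insert (.inl j) T)) else 0 := by
    intro S
    by_cases h : S = {.inl j}
    · subst h
      simp [emon, disjoint_singleton_left, msign_singleton_left]
    · simp [emon, h]
  simp only [odot, theta, hS, sum_ite_eq', mem_univ, if_true, contrGen_apply]

lemma lmulGen_lmulGen_self (a : Gen n) (g : ExtA n) : lmulGen a (lmulGen a g) = 0 := by
  funext U
  simp [lmulGen_apply]

lemma contrGen_contrGen_self (a : Gen n) (f : ExtA n) : contrGen a (contrGen a f) = 0 := by
  funext T
  simp [contrGen_apply]

lemma lmulGen_lmulGen_anticomm {a b : Gen n} (hab : a ≠ b) (g : ExtA n) :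
    lmulGen a (lmulGen b g) = -lmulGen b (lmulGen a g) := by
  have hlt := ite_lt_eq_neg_ite_gt (fun h => hab (gidx_injective h))
  funext U
  simp only [Pi.neg_apply, lmulGen_apply]
  by_cases hU : a ∈ U ∧ b ∈ U
  · obtain ⟨ha, hb⟩ := hU
    have hbU : b ∈ U.erase a := mem_erase.2 ⟨hab.symm, hb⟩
    have haU : a ∈ U.erase b := mem_erase.2 ⟨hab, ha⟩
    have hsb : passSign b ((U.erase a).erase b) = (if gidx a < gidx b then -1 else 1) *
        passSign b U := by rw [passSign_erase_self, passSign_erase ha]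
    have hsa : passSign a ((U.erase b).erase a) = (if gidx b < gidx a then -1 else 1) *
        passSign a U := by rw [passSign_erase_self, passSign_erase hb]
    rw [if_pos ha, if_pos hb, if_pos hbU, if_pos haU, hsb, hsa, erase_right_comm,
      passSign_erase_self, passSign_erase_self, hlt]
    ring
  · rcases not_and_or.1 hU with h | h <;> simp [h]

lemma contrGen_contrGen_anticomm {a b : Gen n} (hab : a ≠ b) (f : ExtA n) :
    contrGen a (contrGen b f) = -contrGen b (contrGen a f) := by
  have hlt := ite_lt_eq_neg_ite_gt (fun h => hab (gidx_injective h))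
  funext T
  simp only [Pi.neg_apply, contrGen_apply]
  by_cases hT : a ∈ T ∨ b ∈ T
  · rcases hT with h | h <;> simp [h]
  · obtain ⟨ha, hb⟩ := not_or.1 hT
    have haT : a ∉ insert b T := by simp [ha, hab]
    have hbT : b ∉ insert a T := by simp [hb, hab.symm]
    rw [if_neg ha, if_neg hb, if_neg haT, if_neg hbT, passSign_insert ha, passSign_insert hb,
      insert_comm, hlt]
    ring

lemma contrGen_lmulGen_anticomm {a b : Gen n} (hab : a ≠ b) (g : ExtA n) :
    contrGen a (lmulGen b g) = -lmulGen b (contrGen a g) := by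
  have hlt := ite_lt_eq_neg_ite_gt (fun h => hab (gidx_injective h))
  funext T
  simp only [Pi.neg_apply, contrGen_apply, lmulGen_apply]
  by_cases hT : a ∉ T ∧ b ∈ T
  · obtain ⟨ha, hb⟩ := hT
    have haT : a ∉ T.erase b := fun h => ha (mem_of_mem_erase h)
    rw [if_neg ha, if_pos hb, if_neg haT, if_pos (mem_insert_of_mem hb), erase_insert_of_ne hab,
      passSign_insert haT, passSign_erase_self, passSign_erase hb, hlt]
    ring
  · rcases not_and_or.1 hT with h | h <;> simp_all [Ne.symm hab]

noncomputable def xiOdotTheta (i j : Fin n) : Module.End ℂ (ExtA n) :=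
  lmulGen (.inr i) * contrGen (.inl j)

lemma xiOdotTheta_apply (i j : Fin n) (f : ExtA n) :
    xiOdotTheta i j f = lmulGen (.inr i) (contrGen (.inl j) f) := rfl

lemma xiOdotTheta_xiOdotTheta (i j k l : Fin n) (f : ExtA n) :
    xiOdotTheta i j (xiOdotTheta k l f) =
      -lmulGen (.inr i) (lmulGen (.inr k) (contrGen (.inl j) (contrGen (.inl l) f))) := by
  rw [xiOdotTheta_apply, xiOdotTheta_apply, contrGen_lmulGen_anticomm Sum.inl_ne_inr, map_neg]

lemma commute_xiOdotTheta (i j k l : Fin n) : Commute (xiOdotTheta i j) (xiOdotTheta k l) := by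
  refine LinearMap.ext fun f => ?_
  rw [Module.End.mul_apply, Module.End.mul_apply, xiOdotTheta_xiOdotTheta,
    xiOdotTheta_xiOdotTheta]
  by_cases hik : i = k
  · simp [hik, lmulGen_lmulGen_self]
  by_cases hjl : j = l
  · simp [hjl, contrGen_contrGen_self]
  rw [lmulGen_lmulGen_anticomm (Sum.inr_injective.ne hik),
    contrGen_contrGen_anticomm (Sum.inl_injective.ne hjl), map_neg, map_neg, neg_neg]

noncomputable def blockOp (B : Finset (Fin n)) : Module.End ℂ (ExtA n) :=
  if 1 < #B then ∑ i ∈ B, ∑ j ∈ B.erase i, xiOdotTheta i j else ∑ i ∈ B, xiOdotTheta i i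

lemma rho_eq_blockOp (B : Finset (Fin n)) : rho B = blockOp B := by
  funext f
  simp only [rho, blockOp, emul_xi, odot_theta]
  split_ifs <;> simp [xiOdotTheta_apply, LinearMap.sum_apply]

lemma commute_blockOp_xiOdotTheta (B : Finset (Fin n)) (k l : Fin n) :
    Commute (blockOp B) (xiOdotTheta k l) := by
  unfold blockOp
  split_ifs
  · exact .sum_left _ _ _ fun i _ => .sum_left _ _ _ fun j _ => commute_xiOdotTheta i j k l
  · exact .sum_left _ _ _ fun i _ => commute_xiOdotTheta i i k l

lemma commute_blockOp (B C : Finset (Fin n)) : Commute (blockOp B) (blockOp C) := by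
  rw [blockOp.eq_1 C]
  split_ifs
  · exact .sum_right _ _ _ fun k _ =>
      .sum_right _ _ _ fun l _ => commute_blockOp_xiOdotTheta B k l
  · exact .sum_right _ _ _ fun k _ => commute_blockOp_xiOdotTheta B k k

noncomputable def inversionSign (w : Equiv.Perm (Fin n)) (a b : Gen n) : ℂ :=
  if gidx a < gidx b ∧ gidx (Equiv.sumCongr w w b) < gidx (Equiv.sumCongr w w a) then -1 else 1

lemma actsign_eq_prod (w : Equiv.Perm (Fin n)) (S : Finset (Gen n)) :
    actsign w S = ∏ a ∈ S, ∏ b ∈ S, inversionSign w a b := by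
  rw [actsign, neg_one_pow_card_filter, prod_product]
  rfl

lemma msign_eq_prod (S T : Finset (Gen n)) :
    msign S T = ∏ a ∈ S, ∏ b ∈ T, if gidx b < gidx a then -1 else 1 := by
  rw [msign, neg_one_pow_card_filter, prod_product]

lemma inversionSign_mul_swap (w : Equiv.Perm (Fin n)) {a b : Gen n} (hab : a ≠ b) :
    inversionSign w a b * inversionSign w b a =
      (if gidx b < gidx a then -1 else 1) *
        (if gidx (Equiv.sumCongr w w b) < gidx (Equiv.sumCongr w w a) then -1 else 1) :=
  ite_and_mul_ite_and (gidx_injective.ne hab)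
    (gidx_injective.ne ((Equiv.sumCongr w w).injective.ne hab))

lemma actsign_union (w : Equiv.Perm (Fin n)) {S T : Finset (Gen n)} (hd : Disjoint S T) :
    actsign w (S ∪ T) = actsign w S * actsign w T * msign S T *
      msign (S.map (Equiv.sumCongr w w).toEmbedding) (T.map (Equiv.sumCongr w w).toEmbedding) := by
  have hcross : msign S T *
      msign (S.map (Equiv.sumCongr w w).toEmbedding) (T.map (Equiv.sumCongr w w).toEmbedding) =
      (∏ a ∈ S, ∏ b ∈ T, inversionSign w a b) * ∏ a ∈ T, ∏ b ∈ S, inversionSign w a b := by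
    rw [msign_eq_prod, msign_eq_prod, prod_map, prod_comm (s := T), ← prod_mul_distrib,
      ← prod_mul_distrib]
    refine prod_congr rfl fun a ha => ?_
    rw [prod_map, ← prod_mul_distrib, ← prod_mul_distrib]
    exact prod_congr rfl fun b hb =>
      (inversionSign_mul_swap w (ne_of_mem_of_not_mem hb (disjoint_left.1 hd ha)).symm).symm
  simp only [actsign_eq_prod, prod_union hd, prod_mul_distrib]
  rw [mul_assoc _ (msign S T), hcross]
  ring

lemma actsign_singleton (w : Equiv.Perm (Fin n)) (a : Gen n) : actsign w {a} = 1 := by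
  simp [actsign_eq_prod, inversionSign]

lemma actsign_insert (w : Equiv.Perm (Fin n)) {a : Gen n} {T : Finset (Gen n)} (ha : a ∉ T) :
    actsign w (insert a T) = actsign w T * passSign a T *
      passSign (Equiv.sumCongr w w a) (T.map (Equiv.sumCongr w w).toEmbedding) := by
  rw [insert_eq, actsign_union w (disjoint_singleton_left.2 ha), map_singleton,
    actsign_singleton, msign_singleton_left, msign_singleton_left, one_mul]
  rfl

noncomputable def pactEnd (w : Equiv.Perm (Fin n)) : Module.End ℂ (ExtA n) where
  toFun := pact w
  map_add' f g := by funext T; simp only [pact, Pi.add_apply]; ring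
  map_smul' c f := by
    funext T; simp only [pact, Pi.smul_apply, smul_eq_mul, RingHom.id_apply]; ring

lemma pactEnd_apply (w : Equiv.Perm (Fin n)) (f : ExtA n) : pactEnd w f = pact w f := rfl

lemma pact_apply_map (w : Equiv.Perm (Fin n)) (f : ExtA n) (T : Finset (Gen n)) :
    pact w f (T.map (Equiv.sumCongr w w).toEmbedding) = actsign w T * f T := by
  have hT : (T.map (Equiv.sumCongr w w).toEmbedding).map (Equiv.sumCongr w w).symm.toEmbedding =
      T := (Equiv.sumCongr w w).finsetCongr.symm_apply_apply T
  rw [pact, hT]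

lemma exists_map_sumCongr_eq (w : Equiv.Perm (Fin n)) (T : Finset (Gen n)) :
    ∃ T' : Finset (Gen n), T'.map (Equiv.sumCongr w w).toEmbedding = T :=
  (Equiv.sumCongr w w).finsetCongr.surjective T

lemma pact_emon (w : Equiv.Perm (Fin n)) (S : Finset (Gen n)) :
    pact w (emon S) = actsign w S • emon (S.map (Equiv.sumCongr w w).toEmbedding) := by
  funext T
  obtain ⟨T, rfl⟩ := exists_map_sumCongr_eq w T
  by_cases h : T = S <;> simp [pact_apply_map, emon, h]

lemma pact_contrGen (w : Equiv.Perm (Fin n)) (a : Gen n) (f : ExtA n) :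
    pact w (contrGen a f) = contrGen (Equiv.sumCongr w w a) (pact w f) := by
  funext T
  obtain ⟨T, rfl⟩ := exists_map_sumCongr_eq w T
  have hins : insert (Equiv.sumCongr w w a) (T.map (Equiv.sumCongr w w).toEmbedding) =
      (insert a T).map (Equiv.sumCongr w w).toEmbedding := by simp [map_insert]
  by_cases ha : a ∈ T
  · simp [pact_apply_map, contrGen_apply, ha]
  · simp only [pact_apply_map, contrGen_apply, ha, mem_map_equiv, Equiv.symm_apply_apply,
      if_false, hins, actsign_insert w ha]
    linear_combination -(actsign w T * passSign a T * f (insert a T)) *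
      passSign_mul_self (Equiv.sumCongr w w a) (T.map (Equiv.sumCongr w w).toEmbedding)

lemma pact_lmulGen (w : Equiv.Perm (Fin n)) (a : Gen n) (g : ExtA n) :
    pact w (lmulGen a g) = lmulGen (Equiv.sumCongr w w a) (pact w g) := by
  funext T
  obtain ⟨T, rfl⟩ := exists_map_sumCongr_eq w T
  have herase : (T.map (Equiv.sumCongr w w).toEmbedding).erase (Equiv.sumCongr w w a) =
      (T.erase a).map (Equiv.sumCongr w w).toEmbedding := by simp [map_erase]
  by_cases ha : a ∈ T
  · have hT := actsign_insert w (notMem_erase a T)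
    rw [insert_erase ha] at hT
    simp only [pact_apply_map, lmulGen_apply, ha, mem_map_equiv, Equiv.symm_apply_apply,
      if_true, herase, hT]
    linear_combination (actsign w (T.erase a) * g (T.erase a) *
      passSign (Equiv.sumCongr w w a) ((T.erase a).map (Equiv.sumCongr w w).toEmbedding)) *
      passSign_mul_self a (T.erase a)
  · simp [pact_apply_map, lmulGen_apply, ha]

lemma pactEnd_mul_xiOdotTheta (w : Equiv.Perm (Fin n)) (i j : Fin n) :
    pactEnd w * xiOdotTheta i j = xiOdotTheta (w i) (w j) * pactEnd w :=
  LinearMap.ext fun f => by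
    simp only [Module.End.mul_apply, pactEnd_apply, xiOdotTheta_apply, pact_lmulGen,
      pact_contrGen]
    rfl

lemma pactEnd_mul_blockOp (w : Equiv.Perm (Fin n)) (B : Finset (Fin n)) :
    pactEnd w * blockOp B = blockOp (B.image w) * pactEnd w := by
  rw [blockOp, blockOp, card_image_of_injective B w.injective]
  split_ifs
  · simp only [mul_sum, sum_mul, sum_image w.injective.injOn, ← image_erase w.injective,
      pactEnd_mul_xiOdotTheta]
  · simp only [mul_sum, sum_mul, sum_image w.injective.injOn, pactEnd_mul_xiOdotTheta]

lemma inversionSign_inl (w : Equiv.Perm (Fin n)) (i j : Fin n) :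
    inversionSign w (.inl i) (.inl j) = if i < j then (if w i < w j then 1 else -1) else 1 := by
  simp only [inversionSign, Equiv.sumCongr_apply, Sum.map_inl, gidx, Fin.val_fin_lt]
  by_cases hij : i < j
  · have hw : w i ≠ w j := w.injective.ne hij.ne
    rcases hw.lt_or_gt with h | h <;> simp [hij, h, h.not_gt]
  · simp [hij]

lemma actsign_top (w : Equiv.Perm (Fin n)) :
    actsign w (univ.image Sum.inl) = ((Equiv.Perm.sign w : ℤ) : ℂ) := by
  rw [actsign_eq_prod, prod_image Sum.inl_injective.injOn, w.sign_eq_prod_prod_Iio]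
  simp only [prod_image Sum.inl_injective.injOn, inversionSign_inl]
  rw [prod_comm]
  push_cast
  refine prod_congr rfl fun j _ => ?_
  rw [← prod_filter, filter_gt_eq_Iio]
  exact prod_congr rfl fun i _ => by split_ifs <;> simp

lemma pact_topTheta (w : Equiv.Perm (Fin n)) :
    pact w (topTheta n) = ((Equiv.Perm.sign w : ℤ) : ℂ) • topTheta n := by
  have htop : (univ.image Sum.inl).map (Equiv.sumCongr w w).toEmbedding = univ.image Sum.inl := by
    ext a
    rcases a with i | i <;> simp [mem_map_equiv]
  rw [topTheta, pact_emon, htop, actsign_top]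

lemma rhoPartition_eq_prod (π : Finpartition (univ : Finset (Fin n))) :
    rhoPartition π = ⇑(π.parts.toList.map blockOp).prod := by
  rw [rhoPartition]
  induction π.parts.toList with
  | nil => rfl
  | cons B L ih =>
    rw [List.foldr_cons, ih, rho_eq_blockOp, List.map_cons, List.prod_cons, Module.End.coe_mul]

lemma pactEnd_mul_prod_blockOp (w : Equiv.Perm (Fin n)) (L : List (Finset (Fin n))) :
    pactEnd w * (L.map blockOp).prod =
      ((L.map fun B => B.image w).map blockOp).prod * pactEnd w := by
  induction L with
  | nil => simp
  | cons B L ih =>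
    rw [List.map_cons, List.map_cons, List.map_cons, List.prod_cons, List.prod_cons, ← mul_assoc,
      pactEnd_mul_blockOp, mul_assoc, ih, mul_assoc]

lemma prod_blockOp_perm {L L' : List (Finset (Fin n))} (h : L.Perm L') :
    (L.map blockOp).prod = (L'.map blockOp).prod :=
  (h.map blockOp).prod_eq' (List.pairwise_map.2 (List.pairwise_of_forall commute_blockOp))

end Fermion

open Fermion

/-- For every set partition `π` of `[n]` and every permutation `w`, the set-partition
fermions satisfy `w · F_π = sign(w) · F_{w(π)}`, where `w(π)` is the set partition whose
blocks are the images of the blocks of `π` under `w`. -/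
theorem pact_Fperm (n : ℕ) (w : Equiv.Perm (Fin n))
    (π π' : Finpartition (Finset.univ : Finset (Fin n)))
    (h : π'.parts = π.parts.image (fun B => B.image w)) :
    pact w (Fperm π) = (((Equiv.Perm.sign w : ℤ) : ℂ)) • Fperm π' := by
  have hperm : (π.parts.toList.map fun B => B.image w).Perm π'.parts.toList := by
    rw [h]
    exact (toList_image_perm (image_injective w.injective).injOn).symm
  rw [Fperm, Fperm, rhoPartition_eq_prod, rhoPartition_eq_prod, ← pactEnd_apply,
    ← Module.End.mul_apply, pactEnd_mul_prod_blockOp, Module.End.mul_apply, pactEnd_apply,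
    pact_topTheta, map_smul, prod_blockOp_perm hperm]
end

section
/- For any four pairwise disjoint nonempty subsets I, J, S, T of [n], the quadratic operator identity ψ_{I∪S}∘ψ_{J∪T} + ψ_{I∪J}∘ψ_{S∪T} + ψ_{I∪T}∘ψ_{J∪S} − ψ_I∘ψ_{J∪S∪T} − ψ_J∘ψ_{I∪S∪T} − ψ_S∘ψ_{I∪J∪T} − ψ_T∘ψ_{I∪J∪S} = 0 holds as operators on Λ{Θ_n,Ξ_n}. -/
open Finset

/-! Write `E_{ab} = ξ_a · (θ_b ⊙ ·)`, so that `ψ_B = ∑_{i ≠ j ∈ B} E_{ij}`. Multiplication by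
the `ξ_a` and contraction by the `θ_b` satisfy the canonical anticommutation relations, hence the
`E_{ab}` commute pairwise and satisfy the exchange relation `E_{ab} E_{cd} = -E_{ad} E_{cb}`. In
the commutative ring they generate, splitting `ψ_{A ∪ B} = ψ_A + ψ_B + ψ_{A,B}` reduces the
identity to `ψ_{I,S} ψ_{J,T} + ψ_{I,J} ψ_{S,T} + ψ_{I,T} ψ_{J,S} = 0`, whose terms cancel in pairs
by the exchange relation. -/

section Anticommuting

variable {R ι κ : Type*} [Ring R] {c : ι → R} {a : κ → R}

lemma mul_mul_mul_eq_neg_of_anticomm (hac : ∀ j i, a j * c i + c i * a j = 0) (i i' : ι)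
    (j j' : κ) : c i * a j * (c i' * a j') = -(c i * c i' * (a j * a j')) := by
  rw [mul_assoc, ← mul_assoc (a j), eq_neg_of_add_eq_zero_left (hac j i')]
  simp only [neg_mul, mul_neg, mul_assoc]

lemma commute_mul_of_anticomm (hcc : ∀ i i', c i * c i' + c i' * c i = 0)
    (haa : ∀ j j', a j * a j' + a j' * a j = 0) (hac : ∀ j i, a j * c i + c i * a j = 0)
    (i i' : ι) (j j' : κ) : Commute (c i * a j) (c i' * a j') := by
  rw [Commute, SemiconjBy, mul_mul_mul_eq_neg_of_anticomm hac,
    mul_mul_mul_eq_neg_of_anticomm hac, eq_neg_of_add_eq_zero_left (hcc i i'),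
    eq_neg_of_add_eq_zero_left (haa j j'), neg_mul_neg]

lemma mul_mul_mul_add_swap_of_anticomm (haa : ∀ j j', a j * a j' + a j' * a j = 0)
    (hac : ∀ j i, a j * c i + c i * a j = 0) (i i' : ι) (j j' : κ) :
    c i * a j * (c i' * a j') + c i * a j' * (c i' * a j) = 0 := by
  rw [mul_mul_mul_eq_neg_of_anticomm hac, mul_mul_mul_eq_neg_of_anticomm hac, ← neg_add,
    ← mul_add, haa, mul_zero, neg_zero]

end Anticommuting

namespace Finset

variable {ι R : Type*}

/-- The abstract form of `psiPair`. -/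
def crossSum [AddCommMonoid R] (e : ι → ι → R) (A B : Finset ι) : R :=
  ∑ a ∈ A, ∑ b ∈ B, (e a b + e b a)

lemma crossSum_union_left [AddCommMonoid R] [DecidableEq ι] (e : ι → ι → R) {A B : Finset ι}
    (h : Disjoint A B) (C : Finset ι) :
    crossSum e (A ∪ B) C = crossSum e A C + crossSum e B C :=
  sum_union h

lemma crossSum_quadratic [CommRing R] (e : ι → ι → R)
    (hswap : ∀ a b c d, e a b * e c d + e a d * e c b = 0) (I J S T : Finset ι) :
    crossSum e I S * crossSum e J T + crossSum e I J * crossSum e S T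
      + crossSum e I T * crossSum e J S = 0 := by
  have hIS_JT : crossSum e I S * crossSum e J T =
      ∑ i ∈ I, ∑ j ∈ J, ∑ s ∈ S, ∑ t ∈ T, (e i s + e s i) * (e j t + e t j) := by
    simp only [crossSum, sum_mul_sum]
  have hIJ_ST : crossSum e I J * crossSum e S T =
      ∑ i ∈ I, ∑ j ∈ J, ∑ s ∈ S, ∑ t ∈ T, (e i j + e j i) * (e s t + e t s) := by
    simp only [crossSum, sum_mul_sum]
    exact sum_congr rfl fun _ _ => sum_comm
  have hIT_JS : crossSum e I T * crossSum e J S =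
      ∑ i ∈ I, ∑ j ∈ J, ∑ s ∈ S, ∑ t ∈ T, (e i t + e t i) * (e j s + e s j) := by
    simp only [crossSum, sum_mul_sum]
    exact sum_congr rfl fun _ _ => sum_congr rfl fun _ _ => sum_comm
  rw [hIS_JT, hIJ_ST, hIT_JS]
  simp only [← sum_add_distrib]
  refine sum_eq_zero fun i _ => sum_eq_zero fun j _ => sum_eq_zero fun s _ =>
    sum_eq_zero fun t _ => ?_
  linear_combination hswap i s j t + hswap i s t j + hswap s i j t + hswap s i t j
    + hswap i j s t + hswap j i t s

variable [DecidableEq ι]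

def blockSum [AddCommMonoid R] (e : ι → ι → R) (B : Finset ι) : R :=
  ∑ i ∈ B, ∑ j ∈ B.erase i, e i j

lemma blockSum_eq_zero_of_card_le_one [AddCommMonoid R] (e : ι → ι → R) {B : Finset ι}
    (hB : #B ≤ 1) : blockSum e B = 0 :=
  sum_eq_zero fun i hi => sum_eq_zero fun j hj =>
    absurd (card_le_one.mp hB j (mem_of_mem_erase hj) i hi) (ne_of_mem_erase hj)

lemma map_blockSum {R' F : Type*} [AddCommMonoid R] [AddCommMonoid R'] [FunLike F R R']
    [AddMonoidHomClass F R R'] (φ : F) (e : ι → ι → R) (B : Finset ι) :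
    φ (blockSum e B) = blockSum (fun i j => φ (e i j)) B := by
  simp only [blockSum, map_sum]

lemma blockSum_union [AddCommMonoid R] (e : ι → ι → R) {A B : Finset ι} (h : Disjoint A B) :
    blockSum e (A ∪ B) = blockSum e A + blockSum e B + crossSum e A B := by
  have hA : ∀ i ∈ A, ∑ j ∈ (A ∪ B).erase i, e i j = ∑ j ∈ A.erase i, e i j + ∑ j ∈ B, e i j :=
    fun i hi => by
      rw [erase_union_distrib, erase_eq_of_notMem (disjoint_left.mp h hi),
        sum_union (disjoint_of_subset_left (erase_subset i A) h)]
  have hB : ∀ i ∈ B, ∑ j ∈ (A ∪ B).erase i, e i j = ∑ j ∈ A, e i j + ∑ j ∈ B.erase i, e i j :=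
    fun i hi => by
      rw [erase_union_distrib, erase_eq_of_notMem (disjoint_right.mp h hi),
        sum_union (disjoint_of_subset_right (erase_subset i B) h)]
  rw [blockSum, blockSum, blockSum, crossSum, sum_union h, sum_congr rfl hA, sum_congr rfl hB]
  simp only [sum_add_distrib]
  rw [sum_comm (s := B) (t := A)]
  abel

lemma blockSum_quadratic [CommRing R] (e : ι → ι → R)
    (hswap : ∀ a b c d, e a b * e c d + e a d * e c b = 0) {I J S T : Finset ι}
    (hIJ : Disjoint I J) (hIS : Disjoint I S) (hIT : Disjoint I T)
    (hJS : Disjoint J S) (hJT : Disjoint J T) (hST : Disjoint S T) :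
    blockSum e (I ∪ S) * blockSum e (J ∪ T) + blockSum e (I ∪ J) * blockSum e (S ∪ T)
      + blockSum e (I ∪ T) * blockSum e (J ∪ S) - blockSum e I * blockSum e (J ∪ S ∪ T)
      - blockSum e J * blockSum e (I ∪ S ∪ T) - blockSum e S * blockSum e (I ∪ J ∪ T)
      - blockSum e T * blockSum e (I ∪ J ∪ S) = 0 := by
  simp only [blockSum_union e (disjoint_union_left.mpr ⟨hJT, hST⟩),
    blockSum_union e (disjoint_union_left.mpr ⟨hIT, hST⟩),
    blockSum_union e (disjoint_union_left.mpr ⟨hIT, hJT⟩),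
    blockSum_union e (disjoint_union_left.mpr ⟨hIS, hJS⟩),
    crossSum_union_left e hIJ, crossSum_union_left e hIS, crossSum_union_left e hJS,
    blockSum_union e hIJ, blockSum_union e hIS, blockSum_union e hIT,
    blockSum_union e hJS, blockSum_union e hJT, blockSum_union e hST]
  linear_combination crossSum_quadratic e hswap I J S T

open scoped IsMulCommutative in
/-- The commutative case applies inside the subring generated by the `e a b`. -/
lemma blockSum_quadratic_of_commute [Ring R] (e : ι → ι → R)
    (hcomm : ∀ a b c d, Commute (e a b) (e c d))
    (hswap : ∀ a b c d, e a b * e c d + e a d * e c b = 0) {I J S T : Finset ι}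
    (hIJ : Disjoint I J) (hIS : Disjoint I S) (hIT : Disjoint I T)
    (hJS : Disjoint J S) (hJT : Disjoint J T) (hST : Disjoint S T) :
    blockSum e (I ∪ S) * blockSum e (J ∪ T) + blockSum e (I ∪ J) * blockSum e (S ∪ T)
      + blockSum e (I ∪ T) * blockSum e (J ∪ S) - blockSum e I * blockSum e (J ∪ S ∪ T)
      - blockSum e J * blockSum e (I ∪ S ∪ T) - blockSum e S * blockSum e (I ∪ J ∪ T)
      - blockSum e T * blockSum e (I ∪ J ∪ S) = 0 := by
  set A := Subring.closure (Set.range (Function.uncurry e))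
  have : IsMulCommutative A := Subring.isMulCommutative_closure <| by
    rintro _ ⟨⟨a, b⟩, rfl⟩ _ ⟨⟨c, d⟩, rfl⟩
    exact hcomm a b c d
  let eA : ι → ι → A := fun a b => ⟨e a b, Subring.subset_closure ⟨(a, b), rfl⟩⟩
  have hA := congrArg A.subtype <|
    blockSum_quadratic eA (fun a b c d => Subtype.ext (hswap a b c d)) hIJ hIS hIT hJS hJT hST
  simp only [map_sub, map_add, map_mul, map_zero, map_blockSum] at hA
  exact hA

end Finset

section Signs

variable {n : ℕ}

lemma gidx_injective : Function.Injective (gidx (n := n)) := by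
  rintro (i | i) (j | j) h <;> simp only [gidx, Nat.add_left_cancel_iff] at h
  · exact congrArg Sum.inl (Fin.ext h)
  · omega
  · omega
  · exact congrArg Sum.inr (Fin.ext h)

/-- The sign of moving the generator `x` into place in the sorted monomial on `V`. -/
noncomputable def insertSign (x : Gen n) (V : Finset (Gen n)) : ℂ :=
  (-1) ^ #{v ∈ V | gidx v < gidx x}

noncomputable def passSign (x y : Gen n) : ℂ :=
  if gidx y < gidx x then -1 else 1

lemma passSign_comm {x y : Gen n} (h : x ≠ y) : passSign y x = -passSign x y := by
  have : gidx x ≠ gidx y := gidx_injective.ne h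
  unfold passSign
  split_ifs <;> first | omega | norm_num

lemma passSign_mul_self (x y : Gen n) : passSign x y * passSign x y = 1 := by
  unfold passSign
  split_ifs <;> norm_num

lemma msign_singleton_left (x : Gen n) (V : Finset (Gen n)) : msign {x} V = insertSign x V := by
  rw [msign, insertSign, singleton_product, filter_map, card_map]
  rfl

lemma insertSign_insert (x : Gen n) {y : Gen n} {V : Finset (Gen n)} (hy : y ∉ V) :
    insertSign x (insert y V) = passSign x y * insertSign x V := by
  unfold insertSign passSign
  rw [filter_insert]
  split_ifs with hyx
  · rw [card_insert_of_notMem (by simp [hy]), pow_succ, mul_comm]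
  · rw [one_mul]

lemma insertSign_of_mem (x : Gen n) {y : Gen n} {V : Finset (Gen n)} (hy : y ∈ V) :
    insertSign x V = passSign x y * insertSign x (V.erase y) := by
  conv_lhs => rw [← insert_erase hy]
  exact insertSign_insert x (notMem_erase y V)

end Signs

section Operators

variable {n : ℕ}

lemma odot_emon_singleton_apply (x : Gen n) (f : ExtA n) (T : Finset (Gen n)) :
    odot (emon {x}) f T = if x ∈ T then 0 else insertSign x T * f (insert x T) := by
  unfold odot emon
  rw [sum_eq_single {x}]
  · by_cases hx : x ∈ T <;> simp [hx, msign_singleton_left]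
  · intro S _ hS
    split_ifs <;> simp
  · simp

lemma emul_emon_singleton_apply (x : Gen n) (g : ExtA n) (U : Finset (Gen n)) :
    emul (emon {x}) g U =
      if x ∈ U then insertSign x (U.erase x) * g (U.erase x) else 0 := by
  unfold emul emon
  by_cases hx : x ∈ U
  · rw [sum_eq_single_of_mem {x} (by simpa using hx)]
    · simp [hx, msign_singleton_left, ← erase_eq]
    · intro S _ hS
      simp [hS]
  · rw [sum_eq_zero, if_neg hx]
    intro S hS
    have hSx : S ≠ {x} := by rintro rfl; simp_all
    simp [hSx]

noncomputable def annOp (x : Gen n) : Module.End ℂ (ExtA n) where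
  toFun := odot (emon {x})
  map_add' f g := by
    funext T
    simp only [Pi.add_apply, odot_emon_singleton_apply]
    split_ifs <;> ring
  map_smul' c f := by
    funext T
    simp only [Pi.smul_apply, smul_eq_mul, RingHom.id_apply, odot_emon_singleton_apply]
    split_ifs <;> ring

noncomputable def creOp (x : Gen n) : Module.End ℂ (ExtA n) where
  toFun := emul (emon {x})
  map_add' f g := by
    funext U
    simp only [Pi.add_apply, emul_emon_singleton_apply]
    split_ifs <;> ring
  map_smul' c f := by
    funext U
    simp only [Pi.smul_apply, smul_eq_mul, RingHom.id_apply, emul_emon_singleton_apply]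
    split_ifs <;> ring

lemma annOp_apply (x : Gen n) (f : ExtA n) (T : Finset (Gen n)) :
    annOp x f T = if x ∈ T then 0 else insertSign x T * f (insert x T) :=
  odot_emon_singleton_apply x f T

lemma creOp_apply (x : Gen n) (g : ExtA n) (U : Finset (Gen n)) :
    creOp x g U = if x ∈ U then insertSign x (U.erase x) * g (U.erase x) else 0 :=
  emul_emon_singleton_apply x g U

lemma annOp_anticomm (x y : Gen n) : annOp x * annOp y + annOp y * annOp x = 0 := by
  refine LinearMap.ext fun f => funext fun T => ?_
  change annOp x (annOp y f) T + annOp y (annOp x f) T = 0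
  simp only [annOp_apply]
  obtain rfl | hxy := eq_or_ne x y
  · simp
  by_cases hx : x ∈ T <;> by_cases hy : y ∈ T
  · simp [hx, hy]
  · simp [hx, hy, hxy]
  · simp [hx, hy, hxy.symm]
  · simp only [hx, hy, mem_insert, hxy, hxy.symm, or_self, if_false]
    rw [insertSign_insert x hy, insertSign_insert y hx, insert_comm, passSign_comm hxy]
    ring

lemma creOp_anticomm (x y : Gen n) : creOp x * creOp y + creOp y * creOp x = 0 := by
  refine LinearMap.ext fun g => funext fun U => ?_
  change creOp x (creOp y g) U + creOp y (creOp x g) U = 0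
  simp only [creOp_apply]
  obtain rfl | hxy := eq_or_ne x y
  · simp
  by_cases hx : x ∈ U <;> by_cases hy : y ∈ U
  · simp only [hx, hy, mem_erase, ne_eq, hxy, hxy.symm, not_false_eq_true, and_self, if_true]
    rw [insertSign_of_mem x (mem_erase.mpr ⟨hxy.symm, hy⟩),
      insertSign_of_mem y (mem_erase.mpr ⟨hxy, hx⟩), erase_right_comm, passSign_comm hxy]
    ring
  · simp [hx, hy]
  · simp [hx, hy]
  · simp [hx, hy]

lemma annOp_creOp_anticomm {x y : Gen n} (hxy : x ≠ y) :
    annOp x * creOp y + creOp y * annOp x = 0 := by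
  refine LinearMap.ext fun f => funext fun T => ?_
  change annOp x (creOp y f) T + creOp y (annOp x f) T = 0
  simp only [annOp_apply, creOp_apply]
  by_cases hx : x ∈ T <;> by_cases hy : y ∈ T
  · simp [hx, hy, hxy]
  · simp [hx, hy]
  · simp only [hx, hy, mem_insert, mem_erase, hxy, hxy.symm, ne_eq, not_false_eq_true,
      true_and, or_true, if_true, if_false]
    rw [erase_insert_of_ne hxy, insertSign_insert y (fun h => hx (mem_of_mem_erase h)),
      insertSign_of_mem x hy, passSign_comm hxy]
    linear_combination (-(insertSign x (T.erase y) * insertSign y (T.erase y) *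
      f (insert x (T.erase y)))) * passSign_mul_self x y
  · simp [hx, hy, hxy.symm]

end Operators

section Transfer

variable {n : ℕ}

noncomputable def transferOp (a b : Fin n) : Module.End ℂ (ExtA n) :=
  creOp (.inr a) * annOp (.inl b)

lemma transferOp_apply (a b : Fin n) (f : ExtA n) :
    transferOp a b f = emul (xi a) (odot (theta b) f) := rfl

lemma transferOp_commute (a b c d : Fin n) : Commute (transferOp a b) (transferOp c d) :=
  commute_mul_of_anticomm (c := fun i => creOp (.inr i)) (a := fun j => annOp (.inl j))
    (fun _ _ => creOp_anticomm _ _) (fun _ _ => annOp_anticomm _ _)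
    (fun _ _ => annOp_creOp_anticomm Sum.inl_ne_inr) a c b d

lemma transferOp_mul_transferOp_add_swap (a b c d : Fin n) :
    transferOp a b * transferOp c d + transferOp a d * transferOp c b = 0 :=
  mul_mul_mul_add_swap_of_anticomm (c := fun i => creOp (.inr i))
    (a := fun j => annOp (.inl j)) (fun _ _ => annOp_anticomm _ _)
    (fun _ _ => annOp_creOp_anticomm Sum.inl_ne_inr) a c b d

end Transfer

lemma psi_apply {n : ℕ} (B : Finset (Fin n)) (f : ExtA n) : psi B f = blockSum transferOp B f := by
  unfold psi
  split_ifs with hB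
  · rw [rho, if_pos hB, blockSum]
    simp only [LinearMap.sum_apply, transferOp_apply]
  · rw [blockSum_eq_zero_of_card_le_one _ (not_lt.mp hB)]
    rfl

theorem psi_quadratic_general (n : ℕ) (I J S T : Finset (Fin n))
    (hIJ : Disjoint I J) (hIS : Disjoint I S) (hIT : Disjoint I T)
    (hJS : Disjoint J S) (hJT : Disjoint J T) (hST : Disjoint S T) (f : ExtA n) :
    psi (I ∪ S) (psi (J ∪ T) f) + psi (I ∪ J) (psi (S ∪ T) f) + psi (I ∪ T) (psi (J ∪ S) f)
      - psi I (psi (J ∪ S ∪ T) f) - psi J (psi (I ∪ S ∪ T) f)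
      - psi S (psi (I ∪ J ∪ T) f) - psi T (psi (I ∪ J ∪ S) f) = 0 := by
  have h := LinearMap.congr_fun (blockSum_quadratic_of_commute transferOp transferOp_commute
    transferOp_mul_transferOp_add_swap hIJ hIS hIT hJS hJT hST) f
  simpa only [psi_apply, LinearMap.sub_apply, LinearMap.add_apply, Module.End.mul_apply,
    LinearMap.zero_apply] using h

/-- The quadratic operator identity: for four pairwise disjoint nonempty subsets
`I, J, S, T` of `[n]`,
`ψ_{I∪S}∘ψ_{J∪T} + ψ_{I∪J}∘ψ_{S∪T} + ψ_{I∪T}∘ψ_{J∪S} − ψ_I∘ψ_{J∪S∪T} − ψ_J∘ψ_{I∪S∪T}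
 − ψ_S∘ψ_{I∪J∪T} − ψ_T∘ψ_{I∪J∪S} = 0`. -/
theorem psi_quadratic (n : ℕ) (I J S T : Finset (Fin n))
    (hI : I.Nonempty) (hJ : J.Nonempty) (hS : S.Nonempty) (hT : T.Nonempty)
    (hIJ : Disjoint I J) (hIS : Disjoint I S) (hIT : Disjoint I T)
    (hJS : Disjoint J S) (hJT : Disjoint J T) (hST : Disjoint S T) (f : ExtA n) :
    psi (I ∪ S) (psi (J ∪ T) f) + psi (I ∪ J) (psi (S ∪ T) f) + psi (I ∪ T) (psi (J ∪ S) f)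
      - psi I (psi (J ∪ S ∪ T) f) - psi J (psi (I ∪ S ∪ T) f)
      - psi S (psi (I ∪ J ∪ T) f) - psi T (psi (I ∪ J ∪ S) f) = 0 :=
  psi_quadratic_general n I J S T hIJ hIS hIT hJS hJT hST f
end
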